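/- Let $\phi^2, \psi^2 > 0$ and $\delta^2 = \phi^2 + \psi^2$. Let $X_1, \dots, X_n$ be real random variables with $\mathbb{E}[X_i] = c_i$ and $\mathbb{E}[(X_i - c_i)^2] = \psi_i^2$, and let $m \in \mathbb{R}$ with $\phi_i^2 = (m - c_i)^2$. Assume $\phi^2 = \frac{1}{n}\sum\phi_i^2$ and $\psi^2 = \frac{1}{n}\sum\psi_i^2$. Then for $Y_i = \frac{\psi^2}{\delta^2} m + \frac{\phi^2}{\delta^2} X_i$, it holds that $\frac{1}{n}\sum_{i=1}^n \mathbb{E}[(Y_i - c_i)^2] = \frac{\psi^2\phi^2}{\delta^2}$. -/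

import Mathlib

/-!
Since the weights `ψ²/δ²` and `φ²/δ²` sum to one, `Yᵢ - cᵢ = (φ²/δ²)(Xᵢ - cᵢ) + (ψ²/δ²)(m - cᵢ)`.
The first summand is centred, so the cross term vanishes and the risk of `Yᵢ` is
`(φ²/δ²)² ψᵢ² + (ψ²/δ²)² φᵢ²`. Averaging gives `(φ⁴ψ² + ψ⁴φ²)/δ⁴ = ψ²φ²/δ²`.
-/

open MeasureTheory

theorem integral_sq_mul_sub_integral_add_const {Ω : Type*} [MeasurableSpace Ω]
    {μ : Measure Ω} [IsProbabilityMeasure μ] {X : Ω → ℝ} (hX : MemLp X 2 μ) (a b : ℝ) :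
    ∫ ω, (a * (X ω - ∫ ω', X ω' ∂μ) + b) ^ 2 ∂μ =
      a ^ 2 * ∫ ω, (X ω - ∫ ω', X ω' ∂μ) ^ 2 ∂μ + b ^ 2 := by
  set c := ∫ ω, X ω ∂μ
  have hL2 : MemLp (fun ω => X ω - c) 2 μ := hX.sub (memLp_const c)
  have hint : Integrable (fun ω => X ω - c) μ := hL2.integrable one_le_two
  have hint_sq : Integrable (fun ω => (X ω - c) ^ 2) μ := hL2.integrable_sq
  have hcentred : ∫ ω, (X ω - c) ∂μ = 0 := by
    rw [integral_sub (hX.integrable one_le_two) (integrable_const c)]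
    simp [c]
  have hexpand : (fun ω => (a * (X ω - c) + b) ^ 2) =
      fun ω => (a ^ 2 * (X ω - c) ^ 2 + 2 * a * b * (X ω - c)) + b ^ 2 := by
    ext ω; ring
  have hint_lin : Integrable (fun ω => a ^ 2 * (X ω - c) ^ 2 + 2 * a * b * (X ω - c)) μ :=
    (hint_sq.const_mul _).add (hint.const_mul _)
  rw [hexpand, integral_add hint_lin (integrable_const _),
    integral_add (hint_sq.const_mul _) (hint.const_mul _), integral_const_mul,
    integral_const_mul, hcentred]
  simp

theorem stmt4_general {Ω : Type*} [MeasurableSpace Ω] (μ : Measure Ω) [IsProbabilityMeasure μ]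
    (n : ℕ) (X : Fin n → Ω → ℝ) (hX : ∀ i, MemLp (X i) 2 μ)
    (c : Fin n → ℝ) (hmean : ∀ i, ∫ ω, X i ω ∂μ = c i)
    (m : ℝ) (φsq ψsq δsq : ℝ) (hφ : 0 < φsq) (hψ : 0 < ψsq) (hδ : δsq = φsq + ψsq)
    (ψi : Fin n → ℝ) (hvar : ∀ i, ∫ ω, (X i ω - c i) ^ 2 ∂μ = ψi i)
    (φi : Fin n → ℝ) (hbias : ∀ i, φi i = (m - c i) ^ 2)
    (hφavg : φsq = (1 / n : ℝ) * ∑ i, φi i) (hψavg : ψsq = (1 / n : ℝ) * ∑ i, ψi i) :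
    (1 / n : ℝ) * ∑ i, ∫ ω, (ψsq / δsq * m + φsq / δsq * X i ω - c i) ^ 2 ∂μ =
      ψsq * φsq / δsq := by
  have hδne : δsq ≠ 0 := by rw [hδ]; positivity
  have hweights : ψsq / δsq + φsq / δsq = 1 := by field_simp; linarith
  have hrisk : ∀ i, ∫ ω, (ψsq / δsq * m + φsq / δsq * X i ω - c i) ^ 2 ∂μ =
      (φsq / δsq) ^ 2 * ψi i + (ψsq / δsq) ^ 2 * φi i := by
    intro i
    have hsplit : ∀ ω, ψsq / δsq * m + φsq / δsq * X i ω - c i =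
        φsq / δsq * (X i ω - ∫ ω', X i ω' ∂μ) + ψsq / δsq * (m - c i) := by
      intro ω
      rw [hmean i]
      linear_combination c i * hweights
    simp only [hsplit]
    rw [integral_sq_mul_sub_integral_add_const (hX i), hmean i, hvar i, hbias i]
    ring
  rw [Finset.sum_congr rfl fun i _ => hrisk i, Finset.sum_add_distrib, ← Finset.mul_sum,
    ← Finset.mul_sum]
  calc (1 / n : ℝ) * ((φsq / δsq) ^ 2 * ∑ i, ψi i + (ψsq / δsq) ^ 2 * ∑ i, φi i)
      = (φsq / δsq) ^ 2 * ψsq + (ψsq / δsq) ^ 2 * φsq := by rw [hψavg, hφavg]; ring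
    _ = ψsq * φsq / δsq := by field_simp; rw [hδ]

/-- the optimal shrinkage `Yᵢ = (ψ²/δ²) m + (φ²/δ²) Xᵢ` achieves the
averaged quadratic risk `ψ²φ²/δ²`, where `δ² = φ² + ψ²`. -/
theorem stmt4 {Ω : Type*} [MeasurableSpace Ω] (μ : Measure Ω) [IsProbabilityMeasure μ]
    (n : ℕ) (hn : 0 < n) (X : Fin n → Ω → ℝ) (hX : ∀ i, MemLp (X i) 2 μ)
    (c : Fin n → ℝ) (hmean : ∀ i, ∫ ω, X i ω ∂μ = c i)
    (m : ℝ) (φsq ψsq δsq : ℝ) (hφ : 0 < φsq) (hψ : 0 < ψsq) (hδ : δsq = φsq + ψsq)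
    (ψi : Fin n → ℝ) (hvar : ∀ i, ∫ ω, (X i ω - c i) ^ 2 ∂μ = ψi i)
    (φi : Fin n → ℝ) (hbias : ∀ i, φi i = (m - c i) ^ 2)
    (hφavg : φsq = (1 / n : ℝ) * ∑ i, φi i) (hψavg : ψsq = (1 / n : ℝ) * ∑ i, ψi i) :
    (1 / n : ℝ) * ∑ i, ∫ ω, (ψsq / δsq * m + φsq / δsq * X i ω - c i) ^ 2 ∂μ =
      ψsq * φsq / δsq :=
  stmt4_general μ n X hX c hmean m φsq ψsq δsq hφ hψ hδ ψi hvar φi hbias hφavg hψavg
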